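/- Let T be the tree with edges {u1u3, u2u3, u3u4, u4u5, u3u'3, u'3u''3, u''3v3, u''3v'3, u5v5, u5v'5}. If L is a list assignment with |L(u1)| ≥ 3, |L(u2)| ≥ 2, |L(u3)| ≥ 4, |L(u4)| ≥ 6, |L(u5)| ≥ 4, |L(u'3)| ≥ 6, |L(u''3)| ≥ 4, |L(v3)| ≥ 3, |L(v'3)| ≥ 2, |L(v5)| ≥ 3, |L(v'5)| ≥ 2, then T admits a 2-distance L-coloring. -/
import Mathlib


/-- The tree of the corresponding configuration, with vertices 0 = u1, 1 = u2, 2 = u3, 3 = u4, 4 = u5, 5 = u'3, 6 = u''3, 7 = v3, 8 = v'3, 9 = v5, 10 = v'5. -/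
def T8 : SimpleGraph (Fin 11) :=
  SimpleGraph.fromRel (fun u v => (u = 0 ∧ v = 2) ∨ (u = 1 ∧ v = 2) ∨ (u = 2 ∧ v = 3) ∨ (u = 3 ∧ v = 4) ∨ (u = 2 ∧ v = 5) ∨ (u = 5 ∧ v = 6) ∨ (u = 6 ∧ v = 7) ∨ (u = 6 ∧ v = 8) ∨ (u = 4 ∧ v = 9) ∨ (u = 4 ∧ v = 10))

instance : DecidableRel T8.Adj := fun u v =>
  decidable_of_iff _ (SimpleGraph.fromRel_adj _ u v).symm

/-- Any conflicting pair (adjacent or at distance two) in `T8` is among an explicit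
list of 48 ordered pairs. -/
lemma conf_mem : ∀ u v : Fin 11, u ≠ v →
    (T8.Adj u v ∨ ∃ w, T8.Adj u w ∧ T8.Adj w v) →
    (u, v) ∈ ([(0,2), (2,0), (1,2), (2,1), (2,3), (3,2), (3,4), (4,3), (2,5), (5,2),
      (5,6), (6,5), (6,7), (7,6), (6,8), (8,6), (4,9), (9,4), (4,10), (10,4),
      (0,1), (1,0), (0,3), (3,0), (0,5), (5,0), (1,3), (3,1), (1,5), (5,1),
      (3,5), (5,3), (2,4), (4,2), (3,9), (9,3), (3,10), (10,3), (9,10), (10,9),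
      (2,6), (6,2), (5,7), (7,5), (5,8), (8,5), (7,8), (8,7)] : List (Fin 11 × Fin 11)) := by
  decide

/-- Choosing three pairwise distinct colors from lists of sizes `≥ 2, ≥ 2, ≥ 1`
is possible unless the first two lists are equal of size two and contain the third. -/
lemma tri_aux (A B C : Finset ℕ) (hA : 2 ≤ A.card) (hB : 2 ≤ B.card) (hC : 1 ≤ C.card)
    (h : ¬(A = B ∧ A.card = 2 ∧ C ⊆ A)) :
    ∃ a ∈ A, ∃ b ∈ B, ∃ c ∈ C, a ≠ b ∧ a ≠ c ∧ b ≠ c := by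
  obtain ⟨c, hc⟩ := Finset.card_pos.mp (by omega : 0 < C.card)
  obtain ⟨a₁, ha₁, a₂, ha₂, ha12⟩ := Finset.one_lt_card.mp (by omega : 1 < A.card)
  obtain ⟨b₁, hb₁, b₂, hb₂, hb12⟩ := Finset.one_lt_card.mp (by omega : 1 < B.card)
  obtain ⟨a, ha, hac⟩ : ∃ a ∈ A, a ≠ c := by
    by_cases h1 : a₁ = c
    · exact ⟨a₂, ha₂, by rw [← h1]; exact ha12.symm⟩
    · exact ⟨a₁, ha₁, h1⟩
  obtain ⟨b, hb, hbc⟩ : ∃ b ∈ B, b ≠ c := by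
    by_cases h1 : b₁ = c
    · exact ⟨b₂, hb₂, by rw [← h1]; exact hb12.symm⟩
    · exact ⟨b₁, hb₁, h1⟩
  by_cases hab : a = b
  · subst hab
    by_cases hA2 : ∃ x ∈ A, x ≠ c ∧ x ≠ a
    · obtain ⟨x, hx, h1, h2⟩ := hA2
      exact ⟨x, hx, a, hb, c, hc, h2, h1, hac⟩
    by_cases hB2 : ∃ x ∈ B, x ≠ c ∧ x ≠ a
    · obtain ⟨x, hx, h1, h2⟩ := hB2
      exact ⟨a, ha, x, hx, c, hc, Ne.symm h2, hac, h1⟩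
    push_neg at hA2 hB2
    have hcA : c ∈ A := by
      by_contra hcA
      have e1 : a₁ = a := by
        by_cases h' : a₁ = c
        · exact absurd (h' ▸ ha₁) hcA
        · exact hA2 a₁ ha₁ h'
      have e2 : a₂ = a := by
        by_cases h' : a₂ = c
        · exact absurd (h' ▸ ha₂) hcA
        · exact hA2 a₂ ha₂ h'
      exact ha12 (e1.trans e2.symm)
    have hAsub : A ⊆ ({c, a} : Finset ℕ) := by
      intro t ht
      by_cases h' : t = c
      · simp [h']
      · simp [hA2 t ht h']
    have hBsub : B ⊆ ({c, a} : Finset ℕ) := by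
      intro t ht
      by_cases h' : t = c
      · simp [h']
      · simp [hB2 t ht h']
    have hpaircard : ({c, a} : Finset ℕ).card = 2 := by
      rw [Finset.card_insert_of_notMem (by simpa using hac.symm)]
      simp
    have hAeq : A = ({c, a} : Finset ℕ) :=
      Finset.eq_of_subset_of_card_le hAsub (by omega)
    have hBeq : B = ({c, a} : Finset ℕ) :=
      Finset.eq_of_subset_of_card_le hBsub (by omega)
    have hCsub : ¬ C ⊆ A := by
      intro hsub
      exact h ⟨hAeq.trans hBeq.symm, by rw [hAeq]; exact hpaircard, hsub⟩
    obtain ⟨c', hc'C, hc'A⟩ := Finset.not_subset.mp hCsub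
    refine ⟨a, ha, c, ?_, c', hc'C, hac, ?_, ?_⟩
    · rw [hBeq]; exact Finset.mem_insert_self _ _
    · intro hh; exact hc'A (hh ▸ ha)
    · intro hh; exact hc'A (hh ▸ hcA)
  · exact ⟨a, ha, b, hb, c, hc, hab, hac, hbc⟩

/-- If removing two colors from a list of size `≥ 4` leaves exactly the same
two-element set as removing one of them from a list of size `≥ 3`, then the big list
is the small list together with the other removed color. -/
lemma struct_aux (S T : Finset ℕ) (hS : 4 ≤ S.card) (hT : 3 ≤ T.card) (c x : ℕ)
    (hEq : S \ {c, x} = T \ {x}) (hCard : (S \ {c, x}).card = 2) :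
    S = insert c T ∧ c ∉ T := by
  have hTx : (T \ {x}).card = 2 := by rw [← hEq]; exact hCard
  rw [Finset.sdiff_singleton_eq_erase] at hTx
  have hxT : x ∈ T := by
    by_contra hx
    rw [Finset.erase_eq_of_notMem hx] at hTx
    omega
  have hT3 : T.card = 3 := by
    have := Finset.card_erase_of_mem hxT
    omega
  have hsub : S ⊆ insert c T := by
    intro t ht
    rcases eq_or_ne t c with rfl | htc
    · exact Finset.mem_insert_self _ _
    rcases eq_or_ne t x with rfl | htx
    · exact Finset.mem_insert_of_mem hxT
    have hmem : t ∈ S \ {c, x} := by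
      rw [Finset.mem_sdiff]
      exact ⟨ht, by simp [htc, htx]⟩
    rw [hEq, Finset.mem_sdiff] at hmem
    exact Finset.mem_insert_of_mem hmem.1
  have hico : (insert c T).card ≤ 4 := le_trans (Finset.card_insert_le _ _) (by omega)
  have hEqS : S = insert c T := Finset.eq_of_subset_of_card_le hsub (by omega)
  refine ⟨hEqS, fun hcT => ?_⟩
  rw [Finset.insert_eq_self.mpr hcT] at hEqS
  rw [hEqS] at hS
  omega

lemma card_pair_le (a b : ℕ) : ({a, b} : Finset ℕ).card ≤ 2 :=
  le_trans (Finset.card_insert_le _ _) (by simp)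

lemma card_triple_le (a b c : ℕ) : ({a, b, c} : Finset ℕ).card ≤ 3 := by
  have h1 := Finset.card_insert_le a ({b, c} : Finset ℕ)
  have h2 := card_pair_le b c
  omega

lemma card_quad_le (a b c d : ℕ) : ({a, b, c, d} : Finset ℕ).card ≤ 4 := by
  have h1 := Finset.card_insert_le a ({b, c, d} : Finset ℕ)
  have h2 := card_triple_le b c d
  omega

lemma card_sdiff_ge (S T : Finset ℕ) : S.card - T.card ≤ (S \ T).card := by
  have h := Finset.card_le_card_sdiff_add_card (s := S) (t := T)
  omega

/-- Verification that a vector of colors satisfying the 24 required disequalities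
is a valid 2-distance coloring of `T8`. -/
lemma key (x0 x1 x2 x3 x4 x5 x6 x7 x8 x9 x10 : ℕ)
    (d01 : x0 ≠ x1) (d02 : x0 ≠ x2) (d03 : x0 ≠ x3) (d05 : x0 ≠ x5)
    (d12 : x1 ≠ x2) (d13 : x1 ≠ x3) (d15 : x1 ≠ x5)
    (d23 : x2 ≠ x3) (d24 : x2 ≠ x4) (d25 : x2 ≠ x5) (d26 : x2 ≠ x6)
    (d34 : x3 ≠ x4) (d35 : x3 ≠ x5) (d39 : x3 ≠ x9) (d310 : x3 ≠ x10)
    (d49 : x4 ≠ x9) (d410 : x4 ≠ x10) (d910 : x9 ≠ x10)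
    (d56 : x5 ≠ x6) (d57 : x5 ≠ x7) (d58 : x5 ≠ x8)
    (d67 : x6 ≠ x7) (d68 : x6 ≠ x8) (d78 : x7 ≠ x8) :
    ∀ u v : Fin 11, u ≠ v → (T8.Adj u v ∨ ∃ w, T8.Adj u w ∧ T8.Adj w v) →
      ![x0,x1,x2,x3,x4,x5,x6,x7,x8,x9,x10] u ≠ ![x0,x1,x2,x3,x4,x5,x6,x7,x8,x9,x10] v := by
  intro u v huv h
  have hp := conf_mem u v huv h
  simp only [List.mem_cons, List.not_mem_nil, or_false, Prod.mk.injEq] at hp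
  rcases hp with ⟨rfl,rfl⟩|⟨rfl,rfl⟩|⟨rfl,rfl⟩|⟨rfl,rfl⟩|⟨rfl,rfl⟩|⟨rfl,rfl⟩|⟨rfl,rfl⟩|⟨rfl,rfl⟩|⟨rfl,rfl⟩|⟨rfl,rfl⟩|⟨rfl,rfl⟩|⟨rfl,rfl⟩|⟨rfl,rfl⟩|⟨rfl,rfl⟩|⟨rfl,rfl⟩|⟨rfl,rfl⟩|⟨rfl,rfl⟩|⟨rfl,rfl⟩|⟨rfl,rfl⟩|⟨rfl,rfl⟩|⟨rfl,rfl⟩|⟨rfl,rfl⟩|⟨rfl,rfl⟩|⟨rfl,rfl⟩|⟨rfl,rfl⟩|⟨rfl,rfl⟩|⟨rfl,rfl⟩|⟨rfl,rfl⟩|⟨rfl,rfl⟩|⟨rfl,rfl⟩|⟨rfl,rfl⟩|⟨rfl,rfl⟩|⟨rfl,rfl⟩|⟨rfl,rfl⟩|⟨rfl,rfl⟩|⟨rfl,rfl⟩|⟨rfl,rfl⟩|⟨rfl,rfl⟩|⟨rfl,rfl⟩|⟨rfl,rfl⟩|⟨rfl,rfl⟩|⟨rfl,rfl⟩|⟨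rfl,rfl⟩|⟨rfl,rfl⟩|⟨rfl,rfl⟩|⟨rfl,rfl⟩|⟨rfl,rfl⟩|⟨rfl,rfl⟩
  exacts [d02, d02.symm, d12, d12.symm, d23, d23.symm, d34, d34.symm, d25, d25.symm, d56, d56.symm, d67, d67.symm, d68, d68.symm, d49, d49.symm, d410, d410.symm, d01, d01.symm, d03, d03.symm, d05, d05.symm, d13, d13.symm, d15, d15.symm, d35, d35.symm, d24, d24.symm, d39, d39.symm, d310, d310.symm, d910, d910.symm, d26, d26.symm, d57, d57.symm, d58, d58.symm, d78, d78.symm]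

/-- The configuration admits a 2-distance coloring from the given lists. -/
theorem colorable_iv (L : Fin 11 → Finset ℕ)
    (h0 : 3 ≤ (L 0).card)
    (h1 : 2 ≤ (L 1).card)
    (h2 : 4 ≤ (L 2).card)
    (h3 : 6 ≤ (L 3).card)
    (h4 : 4 ≤ (L 4).card)
    (h5 : 6 ≤ (L 5).card)
    (h6 : 4 ≤ (L 6).card)
    (h7 : 3 ≤ (L 7).card)
    (h8 : 2 ≤ (L 8).card)
    (h9 : 3 ≤ (L 9).card)
    (h10 : 2 ≤ (L 10).card) :
    ∃ φ : Fin 11 → ℕ, (∀ v, φ v ∈ L v) ∧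
      ∀ u v : Fin 11, u ≠ v →
        (T8.Adj u v ∨ ∃ w, T8.Adj u w ∧ T8.Adj w v) → φ u ≠ φ v := by
  classical
  -- color of vertex 1 (u2)
  obtain ⟨p1, hp1⟩ : (L 1).Nonempty := Finset.card_pos.mp (by omega)
  -- three candidate colors for vertex 2 (u3)
  have hc2 : 3 ≤ ((L 2).erase p1).card := by
    have := Finset.pred_card_le_card_erase (s := L 2) (a := p1)
    omega
  obtain ⟨q1, hq1⟩ : ((L 2).erase p1).Nonempty := Finset.card_pos.mp (by omega)
  obtain ⟨q2, hq2⟩ : (((L 2).erase p1).erase q1).Nonempty := by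
    apply Finset.card_pos.mp
    have := Finset.pred_card_le_card_erase (s := (L 2).erase p1) (a := q1)
    omega
  obtain ⟨q3, hq3⟩ : ((((L 2).erase p1).erase q1).erase q2).Nonempty := by
    apply Finset.card_pos.mp
    have hh1 := Finset.pred_card_le_card_erase (s := (L 2).erase p1) (a := q1)
    have hh2 := Finset.pred_card_le_card_erase (s := ((L 2).erase p1).erase q1) (a := q2)
    omega
  have hq3' : q3 ∈ ((L 2).erase p1).erase q1 := Finset.mem_of_mem_erase hq3
  have hq12 : q1 ≠ q2 := (Finset.ne_of_mem_erase hq2).symm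
  have hq13 : q1 ≠ q3 := (Finset.ne_of_mem_erase hq3').symm
  have hq23 : q2 ≠ q3 := (Finset.ne_of_mem_erase hq3).symm
  have hq1L : q1 ∈ L 2 := Finset.mem_of_mem_erase hq1
  have hq2L : q2 ∈ L 2 := Finset.mem_of_mem_erase (Finset.mem_of_mem_erase hq2)
  have hq3L : q3 ∈ L 2 := Finset.mem_of_mem_erase (Finset.mem_of_mem_erase hq3')
  have hq1p : q1 ≠ p1 := Finset.ne_of_mem_erase hq1
  have hq2p : q2 ≠ p1 := Finset.ne_of_mem_erase (Finset.mem_of_mem_erase hq2)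
  have hq3p : q3 ≠ p1 := Finset.ne_of_mem_erase (Finset.mem_of_mem_erase hq3')
  -- for each candidate: either a full good choice exists, or a rigid structure emerges
  have hcand : ∀ c, c ∈ L 2 → c ≠ p1 →
      (∃ e0 e3 e5,
        e0 ∈ L 0 ∧ e3 ∈ L 3 ∧ e5 ∈ L 5 ∧
        e0 ≠ p1 ∧ e0 ≠ c ∧
        e3 ≠ e0 ∧ e3 ≠ p1 ∧ e3 ≠ c ∧
        e5 ≠ e0 ∧ e5 ≠ p1 ∧ e5 ≠ c ∧ e5 ≠ e3 ∧
        ¬(L 4 \ {c, e3} = L 9 \ {e3} ∧ (L 4 \ {c, e3}).card = 2 ∧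
            L 10 \ {e3} ⊆ L 4 \ {c, e3}) ∧
        ¬(L 6 \ {c, e5} = L 7 \ {e5} ∧ (L 6 \ {c, e5}).card = 2 ∧
            L 8 \ {e5} ⊆ L 6 \ {c, e5})) ∨
      (L 4 = insert c (L 9) ∧ c ∉ L 9) ∨
      (L 6 = insert c (L 7) ∧ c ∉ L 7) := by
    intro c hcL hcp
    obtain ⟨e0, he0⟩ : (L 0 \ {p1, c}).Nonempty := by
      apply Finset.card_pos.mp
      have ha := card_sdiff_ge (L 0) {p1, c}
      have hb := card_pair_le p1 c
      omega
    rw [Finset.mem_sdiff] at he0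
    obtain ⟨he0L, he0'⟩ := he0
    simp only [Finset.mem_insert, Finset.mem_singleton, not_or] at he0'
    obtain ⟨he0p, he0c⟩ := he0'
    obtain ⟨e3, he3⟩ : (L 3 \ {e0, p1, c}).Nonempty := by
      apply Finset.card_pos.mp
      have ha := card_sdiff_ge (L 3) {e0, p1, c}
      have hb := card_triple_le e0 p1 c
      omega
    rw [Finset.mem_sdiff] at he3
    obtain ⟨he3L, he3'⟩ := he3
    simp only [Finset.mem_insert, Finset.mem_singleton, not_or] at he3'
    obtain ⟨he30, he3p, he3c⟩ := he3'
    by_cases hB : (L 4 \ {c, e3} = L 9 \ {e3} ∧ (L 4 \ {c, e3}).card = 2 ∧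
        L 10 \ {e3} ⊆ L 4 \ {c, e3})
    · exact Or.inr (Or.inl (struct_aux (L 4) (L 9) h4 h9 c e3 hB.1 hB.2.1))
    obtain ⟨e5, he5⟩ : (L 5 \ {e0, p1, c, e3}).Nonempty := by
      apply Finset.card_pos.mp
      have ha := card_sdiff_ge (L 5) {e0, p1, c, e3}
      have hb := card_quad_le e0 p1 c e3
      omega
    rw [Finset.mem_sdiff] at he5
    obtain ⟨he5L, he5'⟩ := he5
    simp only [Finset.mem_insert, Finset.mem_singleton, not_or] at he5'
    obtain ⟨he50, he5p, he5c, he53⟩ := he5'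
    by_cases hC : (L 6 \ {c, e5} = L 7 \ {e5} ∧ (L 6 \ {c, e5}).card = 2 ∧
        L 8 \ {e5} ⊆ L 6 \ {c, e5})
    · exact Or.inr (Or.inr (struct_aux (L 6) (L 7) h6 h7 c e5 hC.1 hC.2.1))
    exact Or.inl ⟨e0, e3, e5, he0L, he3L, he5L, he0p, he0c, he30, he3p, he3c,
      he50, he5p, he5c, he53, hB, hC⟩
  -- two candidates cannot both carry the same rigid structure
  have noBB : ∀ x y : ℕ, x ≠ y → (L 4 = insert x (L 9) ∧ x ∉ L 9) →
      (L 4 = insert y (L 9) ∧ y ∉ L 9) → False := by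
    rintro x y hxy ⟨hx4, hx9⟩ ⟨hy4, hy9⟩
    have hxin : x ∈ L 4 := by rw [hx4]; exact Finset.mem_insert_self _ _
    rw [hy4, Finset.mem_insert] at hxin
    rcases hxin with hh | hh
    · exact hxy hh
    · exact hx9 hh
  have noCC : ∀ x y : ℕ, x ≠ y → (L 6 = insert x (L 7) ∧ x ∉ L 7) →
      (L 6 = insert y (L 7) ∧ y ∉ L 7) → False := by
    rintro x y hxy ⟨hx4, hx9⟩ ⟨hy4, hy9⟩
    have hxin : x ∈ L 6 := by rw [hx4]; exact Finset.mem_insert_self _ _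
    rw [hy4, Finset.mem_insert] at hxin
    rcases hxin with hh | hh
    · exact hxy hh
    · exact hx9 hh
  -- pigeonhole: some candidate admits a good choice
  have hpick : ∃ q, q ∈ L 2 ∧ q ≠ p1 ∧ (∃ e0 e3 e5,
      e0 ∈ L 0 ∧ e3 ∈ L 3 ∧ e5 ∈ L 5 ∧
      e0 ≠ p1 ∧ e0 ≠ q ∧
      e3 ≠ e0 ∧ e3 ≠ p1 ∧ e3 ≠ q ∧
      e5 ≠ e0 ∧ e5 ≠ p1 ∧ e5 ≠ q ∧ e5 ≠ e3 ∧
      ¬(L 4 \ {q, e3} = L 9 \ {e3} ∧ (L 4 \ {q, e3}).card = 2 ∧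
          L 10 \ {e3} ⊆ L 4 \ {q, e3}) ∧
      ¬(L 6 \ {q, e5} = L 7 \ {e5} ∧ (L 6 \ {q, e5}).card = 2 ∧
          L 8 \ {e5} ⊆ L 6 \ {q, e5})) := by
    rcases hcand q1 hq1L hq1p with hh1 | hh1 | hh1
    · exact ⟨q1, hq1L, hq1p, hh1⟩
    · rcases hcand q2 hq2L hq2p with hh2 | hh2 | hh2
      · exact ⟨q2, hq2L, hq2p, hh2⟩
      · exact (noBB q1 q2 hq12 hh1 hh2).elim
      · rcases hcand q3 hq3L hq3p with hh3 | hh3 | hh3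
        · exact ⟨q3, hq3L, hq3p, hh3⟩
        · exact (noBB q1 q3 hq13 hh1 hh3).elim
        · exact (noCC q2 q3 hq23 hh2 hh3).elim
    · rcases hcand q2 hq2L hq2p with hh2 | hh2 | hh2
      · exact ⟨q2, hq2L, hq2p, hh2⟩
      · rcases hcand q3 hq3L hq3p with hh3 | hh3 | hh3
        · exact ⟨q3, hq3L, hq3p, hh3⟩
        · exact (noBB q2 q3 hq23 hh2 hh3).elim
        · exact (noCC q1 q3 hq13 hh1 hh3).elim
      · exact (noCC q1 q2 hq12 hh1 hh2).elim
  obtain ⟨q, hqL, hqp, e0, e3, e5, he0L, he3L, he5L, h0p, h0q, h30, h3p, h3q,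
    h50, h5p, h5q, h53, hB, hC⟩ := hpick
  -- color the triangle {4, 9, 10}
  obtain ⟨c4, hc4, c9, hc9, c10, hc10, h49, h410, h910⟩ :=
    tri_aux (L 4 \ {q, e3}) (L 9 \ {e3}) (L 10 \ {e3})
      (by have := card_sdiff_ge (L 4) {q, e3}; have := card_pair_le q e3; omega)
      (by have := card_sdiff_ge (L 9) {e3}; simp only [Finset.card_singleton] at *; omega)
      (by have := card_sdiff_ge (L 10) {e3}; simp only [Finset.card_singleton] at *; omega)
      hB
  -- color the triangle {6, 7, 8}
  obtain ⟨c6, hc6, c7, hc7, c8, hc8, h67, h68, h78⟩ :=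
    tri_aux (L 6 \ {q, e5}) (L 7 \ {e5}) (L 8 \ {e5})
      (by have := card_sdiff_ge (L 6) {q, e5}; have := card_pair_le q e5; omega)
      (by have := card_sdiff_ge (L 7) {e5}; simp only [Finset.card_singleton] at *; omega)
      (by have := card_sdiff_ge (L 8) {e5}; simp only [Finset.card_singleton] at *; omega)
      hC
  rw [Finset.mem_sdiff] at hc4 hc9 hc10 hc6 hc7 hc8
  simp only [Finset.mem_insert, Finset.mem_singleton, not_or] at hc4 hc9 hc10 hc6 hc7 hc8
  obtain ⟨hc4L, hc4q, hc43⟩ := hc4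
  obtain ⟨hc9L, hc93⟩ := hc9
  obtain ⟨hc10L, hc103⟩ := hc10
  obtain ⟨hc6L, hc6q, hc65⟩ := hc6
  obtain ⟨hc7L, hc75⟩ := hc7
  obtain ⟨hc8L, hc85⟩ := hc8
  refine ⟨![e0, p1, q, e3, c4, e5, c6, c7, c8, c9, c10], ?_, ?_⟩
  · intro v
    fin_cases v
    · exact he0L
    · exact hp1
    · exact hqL
    · exact he3L
    · exact hc4L
    · exact he5L
    · exact hc6L
    · exact hc7L
    · exact hc8L
    · exact hc9L
    · exact hc10L
  · exact key e0 p1 q e3 c4 e5 c6 c7 c8 c9 c10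
      h0p h0q (Ne.symm h30) (Ne.symm h50)
      (Ne.symm hqp) (Ne.symm h3p) (Ne.symm h5p)
      (Ne.symm h3q) (Ne.symm hc4q) (Ne.symm h5q) (Ne.symm hc6q)
      (Ne.symm hc43) (Ne.symm h53) (Ne.symm hc93) (Ne.symm hc103)
      h49 h410 h910
      (Ne.symm hc65) (Ne.symm hc75) (Ne.symm hc85)
      h67 h68 h78
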